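/- Let Ω be an unbounded domain in a complex Banach space such that ∞ is a k'-point of Ω (no k_Ω-Cauchy sequence tends to ∞ in norm). Then Ω is hyperbolic. -/

import Mathlib

open Filter Metric Set Topology MeasureTheory

/-- The Lempert function of a domain `Ω` in a complex Banach space. -/
noncomputable def lempert {E : Type*} [NormedAddCommGroup E] [NormedSpace ℂ E]
    (Ω : Set E) (z w : E) : ℝ :=
  sInf {r : ℝ | ∃ (f : ℂ → E) (l : ℂ), DifferentiableOn ℂ f (ball 0 1) ∧
    MapsTo f (ball 0 1) Ω ∧ f 0 = z ∧ f l = w ∧ l ∈ ball (0:ℂ) 1 ∧ r = ‖l‖}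

/-- The Poincaré distance from `0` to a point at "radius" `r`. -/
noncomputable def poincareDist (r : ℝ) : ℝ := (1/2) * Real.log ((1+r)/(1-r))

/-- The Kobayashi pseudo-distance of a domain `Ω`, defined via chains. -/
noncomputable def kobayashi {E : Type*} [NormedAddCommGroup E] [NormedSpace ℂ E]
    (Ω : Set E) (z w : E) : ℝ :=
  sInf {r : ℝ | ∃ (n : ℕ) (c : ℕ → E), c 0 = z ∧ c n = w ∧ (∀ i, i ≤ n → c i ∈ Ω) ∧
    r = ∑ i ∈ Finset.range n, poincareDist (lempert Ω (c i) (c (i+1)))}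

/-- `Ω` is (Kobayashi) hyperbolic: `kobayashi Ω` is a distance defining the norm topology. -/
def IsHyperbolic {E : Type*} [NormedAddCommGroup E] [NormedSpace ℂ E] (Ω : Set E) : Prop :=
  (∀ z ∈ Ω, ∀ w ∈ Ω, kobayashi Ω z w = 0 → z = w) ∧
  (∀ z ∈ Ω, ∀ ε > 0, ∃ δ > 0, ∀ w ∈ Ω, kobayashi Ω z w < δ → ‖w - z‖ < ε) ∧
  (∀ z ∈ Ω, ∀ ε > 0, ∃ δ > 0, ∀ w ∈ Ω, ‖w - z‖ < δ → kobayashi Ω z w < ε)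

/-- A sequence in `Ω` which is Cauchy for the Kobayashi pseudo-distance. -/
def KCauchy {E : Type*} [NormedAddCommGroup E] [NormedSpace ℂ E]
    (Ω : Set E) (x : ℕ → E) : Prop :=
  ∀ ε > 0, ∃ N, ∀ m ≥ N, ∀ n ≥ N, kobayashi Ω (x m) (x n) < ε

/-- `Ω` is complete hyperbolic. -/
def IsCompleteHyperbolic {E : Type*} [NormedAddCommGroup E] [NormedSpace ℂ E]
    (Ω : Set E) : Prop :=
  IsHyperbolic Ω ∧ ∀ x : ℕ → E, (∀ n, x n ∈ Ω) → KCauchy Ω x →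
    ∃ p ∈ Ω, Tendsto x atTop (nhds p)

/-- The filter of neighborhoods of `∞` (traces on `Ω` taken by `⊓ 𝓟 Ω` where needed). -/
noncomputable def atInfFilter (E : Type*) [NormedAddCommGroup E] : Filter E :=
  Filter.comap (fun z : E => ‖z‖) Filter.atTop

/-- The boundary point described by the filter `l` (either `𝓝 a` for `a ∈ ∂Ω`, or the
filter at `∞`) is a `k'`-point of `Ω`: no `k_Ω`-Cauchy sequence of `Ω` converges to it. -/
def KPrimeAt {E : Type*} [NormedAddCommGroup E] [NormedSpace ℂ E]
    (Ω : Set E) (l : Filter E) : Prop :=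
  ¬ ∃ x : ℕ → E, (∀ n, x n ∈ Ω) ∧ KCauchy Ω x ∧ Tendsto x atTop l

/-- A real-valued function is subharmonic on `U ⊆ ℂ`: upper semicontinuous and
satisfying the sub-mean-value inequality on closed disks contained in `U`. -/
def SubharmonicOnR (v : ℂ → ℝ) (U : Set ℂ) : Prop :=
  UpperSemicontinuousOn v U ∧ ∀ c : ℂ, ∀ r : ℝ, 0 < r → closedBall c r ⊆ U →
    v c ≤ (2 * Real.pi)⁻¹ *
      ∫ θ in (0:ℝ)..(2*Real.pi), v (c + (r : ℂ) * Complex.exp (θ * Complex.I))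

/-- Plurisubharmonicity on a domain of a complex Banach space. -/
def PlurisubharmonicOn {E : Type*} [NormedAddCommGroup E] [NormedSpace ℂ E]
    (u : E → ℝ) (Ω : Set E) : Prop :=
  UpperSemicontinuousOn u Ω ∧
    ∀ a b : E, SubharmonicOnR (fun t => u (a + t • b)) {t : ℂ | a + t • b ∈ Ω}

/-!
Along a chain of near-extremal analytic discs from `a` to `w`, the Schwarz lemma bounds each step
`‖c (i + 1) - c i‖` by `2R/σ` times its Lempert radius as long as the disc stays in the ball of
radius `R` on `‖t‖ < σ`; so `‖w - a‖ ≤ ε` once `k_Ω(a, w)` is small enough. Otherwise some disc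
reaches norm `R` at a point `q` with `k_Ω(a, q)` small, and letting `R → ∞` gives a
`k_Ω`-Cauchy sequence tending to `∞`, which a `k'`-point at `∞` forbids. This yields that `k_Ω`
separates points and controls the norm; the converse continuity comes from affine discs in small
balls.

The Lempert function is an infimum over discs, so it is `0` for two points that no disc joins.
Near-extremal discs thus need that any two points of a domain lie on one disc: precompose a
Bernstein polynomial close to a path with a map folding the unit disc into a thin neighbourhood
of `[0, 1]`.
-/

lemma poincareDist_eq_artanh {r : ℝ} (hr : r ∈ Icc (-1) 1) : poincareDist r = Real.artanh r :=
  (Real.artanh_eq_half_log hr).symm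

lemma poincareDist_nonneg {r : ℝ} (h0 : 0 ≤ r) (h1 : r ≤ 1) : 0 ≤ poincareDist r := by
  rw [poincareDist_eq_artanh ⟨by linarith, h1⟩]
  exact Real.artanh_nonneg h0

lemma poincareDist_le_poincareDist {r s : ℝ} (h0 : 0 ≤ r) (hrs : r ≤ s) (h1 : s < 1) :
    poincareDist r ≤ poincareDist s := by
  rw [poincareDist_eq_artanh ⟨by linarith, by linarith⟩,
    poincareDist_eq_artanh ⟨by linarith, h1.le⟩]
  exact Real.artanh_le_artanh (by linarith) h1 hrs

lemma half_le_poincareDist {r : ℝ} (h0 : 0 ≤ r) (h1 : r < 1) : r / 2 ≤ poincareDist r := by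
  have hr : 0 < 1 - r := by linarith
  have hlog := Real.log_le_sub_one_of_pos (show 0 < (1 - r) / (1 + r) by positivity)
  have hquot : (1 - r) / (1 + r) ≤ 1 - r := by
    rw [div_le_iff₀ (by linarith)]; nlinarith
  rw [← inv_div, Real.log_inv, inv_div] at hlog
  unfold poincareDist; linarith

lemma poincareDist_le_two_mul {r : ℝ} (h0 : 0 ≤ r) (h1 : r ≤ 1 / 2) :
    poincareDist r ≤ 2 * r := by
  have hr : 0 < 1 - r := by linarith
  have hlog := Real.log_le_sub_one_of_pos (show 0 < (1 + r) / (1 - r) by positivity)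
  have hquot : (1 + r) / (1 - r) - 1 ≤ 4 * r := by
    rw [div_sub_one hr.ne', div_le_iff₀ hr]; nlinarith
  unfold poincareDist; linarith

open ComplexConjugate

section Lempert

variable {E : Type*} [NormedAddCommGroup E] [NormedSpace ℂ E] {Ω : Set E} {z w v : E}
  {f : ℂ → E} {l : ℂ}

def IsDiscJoining (Ω : Set E) (z w : E) (f : ℂ → E) (l : ℂ) : Prop :=
  DifferentiableOn ℂ f (ball 0 1) ∧ MapsTo f (ball 0 1) Ω ∧ f 0 = z ∧ f l = w ∧
    l ∈ ball (0 : ℂ) 1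

lemma lempert_eq_sInf (Ω : Set E) (z w : E) :
    lempert Ω z w = sInf {r | ∃ f l, IsDiscJoining Ω z w f l ∧ r = ‖l‖} := by
  simp only [lempert, IsDiscJoining, and_assoc]

lemma IsDiscJoining.norm_lt_one (h : IsDiscJoining Ω z w f l) : ‖l‖ < 1 :=
  mem_ball_zero_iff.1 h.2.2.2.2

lemma IsDiscJoining.lempert_le (h : IsDiscJoining Ω z w f l) : lempert Ω z w ≤ ‖l‖ := by
  rw [lempert_eq_sInf]
  exact csInf_le ⟨0, by rintro _ ⟨f, l, -, rfl⟩; exact norm_nonneg l⟩ ⟨f, l, h, rfl⟩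

lemma lempert_nonneg (Ω : Set E) (z w : E) : 0 ≤ lempert Ω z w := by
  rw [lempert_eq_sInf]
  exact Real.sInf_nonneg (by rintro _ ⟨f, l, -, rfl⟩; exact norm_nonneg l)

lemma lempert_lt_one (Ω : Set E) (z w : E) : lempert Ω z w < 1 := by
  by_cases h : ∃ f l, IsDiscJoining Ω z w f l
  · obtain ⟨f, l, h⟩ := h
    exact h.lempert_le.trans_lt h.norm_lt_one
  · have hempty : {r | ∃ f l, IsDiscJoining Ω z w f l ∧ r = ‖l‖} = ∅ := by
      refine eq_empty_iff_forall_notMem.2 ?_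
      rintro _ ⟨f, l, hfl, -⟩
      exact h ⟨f, l, hfl⟩
    simp [lempert_eq_sInf, hempty]

lemma IsDiscJoining.exists_norm_lt (h : IsDiscJoining Ω z w f l) {r : ℝ}
    (hr : lempert Ω z w < r) : ∃ f l, IsDiscJoining Ω z w f l ∧ ‖l‖ < r := by
  rw [lempert_eq_sInf] at hr
  obtain ⟨_, ⟨f, l, hfl, rfl⟩, hlt⟩ :=
    exists_lt_of_csInf_lt (s := {r | ∃ f l, IsDiscJoining Ω z w f l ∧ r = ‖l‖})
      ⟨‖l‖, f, l, h, rfl⟩ hr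
  exact ⟨f, l, hfl, hlt⟩

lemma poincareDist_lempert_nonneg (Ω : Set E) (z w : E) :
    0 ≤ poincareDist (lempert Ω z w) :=
  poincareDist_nonneg (lempert_nonneg Ω z w) (lempert_lt_one Ω z w).le

noncomputable def discSwap (a t : ℂ) : ℂ := (a - t) / (1 - conj a * t)

lemma one_sub_conj_mul_ne_zero {a t : ℂ} (ha : ‖a‖ < 1) (ht : ‖t‖ < 1) :
    1 - conj a * t ≠ 0 := by
  have hlt : ‖conj a * t‖ < 1 := by
    rw [norm_mul, Complex.norm_conj]
    exact mul_lt_one_of_nonneg_of_lt_one_left (norm_nonneg a) ha ht.le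
  intro h
  rw [← sub_eq_zero.1 h, norm_one] at hlt
  exact lt_irrefl 1 hlt

lemma norm_discSwap_lt_one {a t : ℂ} (ha : ‖a‖ < 1) (ht : ‖t‖ < 1) : ‖discSwap a t‖ < 1 := by
  rw [discSwap, norm_div, div_lt_one (norm_pos_iff.2 (one_sub_conj_mul_ne_zero ha ht))]
  have hdiff : Complex.normSq (1 - conj a * t) - Complex.normSq (a - t)
      = (1 - Complex.normSq a) * (1 - Complex.normSq t) := by
    simp only [Complex.normSq_apply, Complex.sub_re, Complex.sub_im, Complex.mul_re,
      Complex.mul_im, Complex.one_re, Complex.one_im, Complex.conj_re, Complex.conj_im]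
    ring
  simp only [Complex.normSq_eq_norm_sq] at hdiff
  have hsq : ‖a - t‖ ^ 2 < ‖1 - conj a * t‖ ^ 2 := by
    nlinarith [pow_lt_one₀ (norm_nonneg a) ha two_ne_zero,
      pow_lt_one₀ (norm_nonneg t) ht two_ne_zero]
  exact lt_of_pow_lt_pow_left₀ 2 (norm_nonneg _) hsq

lemma differentiableOn_discSwap {a : ℂ} (ha : ‖a‖ < 1) :
    DifferentiableOn ℂ (discSwap a) (ball 0 1) := fun _ ht =>
  ((differentiableAt_const a).sub differentiableAt_id |>.div
    ((differentiableAt_const _).sub ((differentiableAt_const _).mul differentiableAt_id))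
    (one_sub_conj_mul_ne_zero ha (mem_ball_zero_iff.1 ht))).differentiableWithinAt

lemma IsDiscJoining.symm (h : IsDiscJoining Ω z w f l) :
    IsDiscJoining Ω w z (f ∘ discSwap l) l := by
  obtain ⟨hf, hfΩ, hf0, hfl, hl⟩ := h
  have hmaps : MapsTo (discSwap l) (ball 0 1) (ball 0 1) := fun t ht => by
    rw [mem_ball_zero_iff] at ht ⊢
    exact norm_discSwap_lt_one (mem_ball_zero_iff.1 hl) ht
  refine ⟨hf.comp (differentiableOn_discSwap (mem_ball_zero_iff.1 hl)) hmaps,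
    hfΩ.comp hmaps, ?_, ?_, hl⟩ <;> simp [discSwap, hf0, hfl]

lemma lempert_symm (Ω : Set E) (z w : E) : lempert Ω z w = lempert Ω w z := by
  have key : ∀ z w : E, {r | ∃ f l, IsDiscJoining Ω z w f l ∧ r = ‖l‖} ⊆
      {r | ∃ f l, IsDiscJoining Ω w z f l ∧ r = ‖l‖} := by
    rintro z w _ ⟨f, l, h, rfl⟩
    exact ⟨_, l, h.symm, rfl⟩
  rw [lempert_eq_sInf, lempert_eq_sInf, (key z w).antisymm (key w z)]

end Lempert

section Chains

variable {α : Type*} {Ω : Set α} {z w v : α} {c d : ℕ → α} {m n : ℕ}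

def IsChainJoining (Ω : Set α) (z w : α) (c : ℕ → α) (n : ℕ) : Prop :=
  c 0 = z ∧ c n = w ∧ ∀ i ≤ n, c i ∈ Ω

lemma IsChainJoining.take (h : IsChainJoining Ω z w c n) {i : ℕ} (hi : i ≤ n) :
    IsChainJoining Ω z (c i) c i :=
  ⟨h.1, rfl, fun j hj => h.2.2 j (hj.trans hi)⟩

lemma isChainJoining_pair (hz : z ∈ Ω) (hw : w ∈ Ω) :
    IsChainJoining Ω z w (fun i => if i = 0 then z else w) 1 :=
  ⟨rfl, rfl, fun i _ => by dsimp only; split_ifs <;> assumption⟩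

def chainAppend (c : ℕ → α) (n : ℕ) (d : ℕ → α) (i : ℕ) : α :=
  if i ≤ n then c i else d (i - n)

lemma chainAppend_add (hcd : c n = d 0) (i : ℕ) : chainAppend c n d (n + i) = d i := by
  rcases Nat.eq_zero_or_pos i with rfl | hi
  · simp [chainAppend, hcd]
  · simp [chainAppend, show ¬ n + i ≤ n by omega]

lemma IsChainJoining.append (hc : IsChainJoining Ω z w c n) (hd : IsChainJoining Ω w v d m) :
    IsChainJoining Ω z v (chainAppend c n d) (n + m) := by
  refine ⟨by simp [chainAppend, hc.1], ?_, fun i hi => ?_⟩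
  · rw [chainAppend_add (hc.2.1.trans hd.1.symm), hd.2.1]
  · unfold chainAppend
    split_ifs with hin
    · exact hc.2.2 i hin
    · exact hd.2.2 _ (by omega)

lemma IsChainJoining.reverse (h : IsChainJoining Ω z w c n) :
    IsChainJoining Ω w z (fun i => c (n - i)) n :=
  ⟨by simpa using h.2.1, by simpa using h.1, fun i _ => h.2.2 _ (Nat.sub_le n i)⟩

end Chains

section Kobayashi

variable {E : Type*} [NormedAddCommGroup E] [NormedSpace ℂ E] {Ω : Set E} {z w v : E}
  {c d : ℕ → E} {m n : ℕ}

noncomputable def chainLength (Ω : Set E) (c : ℕ → E) (n : ℕ) : ℝ :=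
  ∑ i ∈ Finset.range n, poincareDist (lempert Ω (c i) (c (i + 1)))

lemma kobayashi_eq_sInf (Ω : Set E) (z w : E) :
    kobayashi Ω z w = sInf {r | ∃ n c, IsChainJoining Ω z w c n ∧ r = chainLength Ω c n} := by
  simp only [kobayashi, IsChainJoining, chainLength, and_assoc]

lemma chainLength_nonneg (Ω : Set E) (c : ℕ → E) (n : ℕ) : 0 ≤ chainLength Ω c n :=
  Finset.sum_nonneg fun _ _ => poincareDist_lempert_nonneg Ω _ _

lemma chainLength_mono (Ω : Set E) (c : ℕ → E) (hmn : m ≤ n) :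
    chainLength Ω c m ≤ chainLength Ω c n :=
  Finset.sum_le_sum_of_subset_of_nonneg (Finset.range_subset_range.2 hmn)
    fun _ _ _ => poincareDist_lempert_nonneg Ω _ _

lemma IsChainJoining.kobayashi_le (h : IsChainJoining Ω z w c n) :
    kobayashi Ω z w ≤ chainLength Ω c n := by
  rw [kobayashi_eq_sInf]
  exact csInf_le ⟨0, by rintro _ ⟨n, c, -, rfl⟩; exact chainLength_nonneg Ω c n⟩ ⟨n, c, h, rfl⟩

lemma kobayashi_nonneg (Ω : Set E) (z w : E) : 0 ≤ kobayashi Ω z w := by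
  rw [kobayashi_eq_sInf]
  exact Real.sInf_nonneg (by rintro _ ⟨n, c, -, rfl⟩; exact chainLength_nonneg Ω c n)

lemma kobayashi_le_poincareDist_lempert (hz : z ∈ Ω) (hw : w ∈ Ω) :
    kobayashi Ω z w ≤ poincareDist (lempert Ω z w) := by
  simpa [chainLength] using (isChainJoining_pair hz hw).kobayashi_le (Ω := Ω)

lemma exists_chain_lt (hz : z ∈ Ω) (hw : w ∈ Ω) {δ : ℝ} (h : kobayashi Ω z w < δ) :
    ∃ n c, IsChainJoining Ω z w c n ∧ chainLength Ω c n < δ := by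
  rw [kobayashi_eq_sInf] at h
  obtain ⟨_, ⟨n, c, hc, rfl⟩, hlt⟩ :=
    exists_lt_of_csInf_lt (s := {r | ∃ n c, IsChainJoining Ω z w c n ∧ r = chainLength Ω c n})
      ⟨_, 1, _, isChainJoining_pair hz hw, rfl⟩ h
  exact ⟨n, c, hc, hlt⟩

lemma chainLength_append (hcd : c n = d 0) :
    chainLength Ω (chainAppend c n d) (n + m) = chainLength Ω c n + chainLength Ω d m := by
  rw [chainLength, Finset.sum_range_add]
  congr 1
  · refine Finset.sum_congr rfl fun i hi => ?_
    have hi := Finset.mem_range.1 hi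
    simp only [chainAppend, if_pos hi.le, if_pos (show i + 1 ≤ n by omega)]
  · refine Finset.sum_congr rfl fun i _ => ?_
    rw [add_assoc, chainAppend_add hcd, chainAppend_add hcd]

lemma kobayashi_triangle (hz : z ∈ Ω) (hw : w ∈ Ω) (hv : v ∈ Ω) :
    kobayashi Ω z v ≤ kobayashi Ω z w + kobayashi Ω w v := by
  refine le_of_forall_pos_lt_add fun ε hε => ?_
  obtain ⟨n, c, hc, hcε⟩ := exists_chain_lt hz hw (lt_add_of_pos_right _ (half_pos hε))
  obtain ⟨m, d, hd, hdε⟩ := exists_chain_lt hw hv (lt_add_of_pos_right _ (half_pos hε))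
  calc kobayashi Ω z v ≤ chainLength Ω (chainAppend c n d) (n + m) := (hc.append hd).kobayashi_le
    _ = chainLength Ω c n + chainLength Ω d m := chainLength_append (hc.2.1.trans hd.1.symm)
    _ < kobayashi Ω z w + kobayashi Ω w v + ε := by linarith

lemma chainLength_reverse (Ω : Set E) (c : ℕ → E) (n : ℕ) :
    chainLength Ω (fun i => c (n - i)) n = chainLength Ω c n := by
  rw [chainLength, chainLength,
    ← Finset.sum_range_reflect (fun i => poincareDist (lempert Ω (c i) (c (i + 1)))) n]
  refine Finset.sum_congr rfl fun i hi => ?_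
  have hi := Finset.mem_range.1 hi
  rw [lempert_symm, show n - i = n - 1 - i + 1 by omega, show n - (i + 1) = n - 1 - i by omega]

lemma kobayashi_symm (Ω : Set E) (z w : E) : kobayashi Ω z w = kobayashi Ω w z := by
  have key : ∀ z w : E, {r | ∃ n c, IsChainJoining Ω z w c n ∧ r = chainLength Ω c n} ⊆
      {r | ∃ n c, IsChainJoining Ω w z c n ∧ r = chainLength Ω c n} := by
    rintro z w _ ⟨n, c, h, rfl⟩
    exact ⟨n, _, h.reverse, (chainLength_reverse Ω c n).symm⟩
  rw [kobayashi_eq_sInf, kobayashi_eq_sInf, (key z w).antisymm (key w z)]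

end Kobayashi

section StripFold

lemma norm_cos_sub_cos_re_le {z : ℂ} (hz : |z.im| ≤ 1) :
    ‖Complex.cos z - Real.cos z.re‖ ≤ 2 * |z.im| := by
  set x := z.re
  set y := z.im
  have hdecomp : Complex.cos z - Real.cos x
      = ((Real.cos x * (Real.cosh y - 1) : ℝ) : ℂ)
        - ((Real.sin x * Real.sinh y : ℝ) : ℂ) * Complex.I := by
    conv_lhs => rw [← Complex.re_add_im z, Complex.cos_add_mul_I]
    push_cast
    ring
  have hcos : |Real.cos x * (Real.cosh y - 1)| ≤ Real.cosh |y| - 1 := by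
    rw [abs_mul, abs_of_nonneg (sub_nonneg.2 (Real.one_le_cosh y)), Real.cosh_abs]
    exact mul_le_of_le_one_left (sub_nonneg.2 (Real.one_le_cosh y)) (Real.abs_cos_le_one x)
  have hsin : |Real.sin x * Real.sinh y| ≤ Real.sinh |y| := by
    rw [abs_mul, Real.abs_sinh]
    exact mul_le_of_le_one_left (Real.sinh_nonneg_iff.2 (abs_nonneg y)) (Real.abs_sin_le_one x)
  have hexp := Real.abs_exp_sub_one_le (x := |y|) (by rwa [abs_abs])
  rw [abs_abs, abs_of_nonneg (by linarith [Real.add_one_le_exp |y|, abs_nonneg y])] at hexp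
  calc ‖Complex.cos z - Real.cos x‖
      ≤ |Real.cos x * (Real.cosh y - 1)| + |Real.sin x * Real.sinh y| := by
        rw [hdecomp]
        refine (norm_sub_le _ _).trans ?_
        rw [norm_mul, Complex.norm_I, mul_one, Complex.norm_real, Complex.norm_real,
          Real.norm_eq_abs, Real.norm_eq_abs]
    _ ≤ Real.exp |y| - 1 := by linarith [Real.cosh_add_sinh |y|]
    _ ≤ 2 * |y| := hexp

lemma re_one_add_div_one_sub_pos {t : ℂ} (ht : ‖t‖ < 1) : 0 < ((1 + t) / (1 - t)).re := by
  have hden : 1 - t ≠ 0 := sub_ne_zero.2 fun h => by simp [← h] at ht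
  have hnum : (1 + t).re * (1 - t).re + (1 + t).im * (1 - t).im = 1 - ‖t‖ ^ 2 := by
    rw [← Complex.normSq_eq_norm_sq]
    simp only [Complex.add_re, Complex.add_im, Complex.sub_re, Complex.sub_im,
      Complex.one_re, Complex.one_im, Complex.normSq_apply]
    ring
  rw [Complex.div_re, ← add_div, hnum]
  exact div_pos (by nlinarith [norm_nonneg t]) (Complex.normSq_pos.2 hden)

/-- `t ↦ A log((1 + t) / (1 - t))` maps the unit disc onto the strip `|Im| < Aπ/2`, which
`(1 - cos) / 2` folds into a thin neighbourhood of `[0, 1]`. -/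
noncomputable def stripFold (A : ℝ) (t : ℂ) : ℂ :=
  (1 - Complex.cos (A * Complex.log ((1 + t) / (1 - t)))) / 2

lemma differentiableOn_stripFold (A : ℝ) : DifferentiableOn ℂ (stripFold A) (ball 0 1) := by
  intro t ht
  have ht := mem_ball_zero_iff.1 ht
  have hden : 1 - t ≠ 0 := sub_ne_zero.2 fun h => by simp [← h] at ht
  have hq : DifferentiableAt ℂ (fun s => (1 + s) / (1 - s)) t :=
    ((differentiableAt_const 1).add differentiableAt_id).div
      ((differentiableAt_const 1).sub differentiableAt_id) hden
  have hlog := (Complex.differentiableAt_log (Complex.mem_slitPlane_iff.2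
    (Or.inl (re_one_add_div_one_sub_pos ht)))).comp t hq
  exact (((differentiableAt_const 1).sub ((differentiableAt_const _).mul hlog).ccos).div_const
    2).differentiableWithinAt

lemma stripFold_zero (A : ℝ) : stripFold A 0 = 0 := by
  simp [stripFold]

lemma stripFold_tanh {A : ℝ} (hA : A ≠ 0) : stripFold A (Real.tanh (Real.pi / (2 * A))) = 1 := by
  set th := Real.tanh (Real.pi / (2 * A))
  have hth : th ∈ Icc (-1) 1 := ⟨(Real.neg_one_lt_tanh _).le, (Real.tanh_lt_one _).le⟩
  have hlog : Real.log ((1 + th) / (1 - th)) = 2 * (Real.pi / (2 * A)) := by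
    have := Real.artanh_eq_half_log hth
    rw [Real.artanh_tanh] at this
    linarith
  have hnonneg : 0 ≤ (1 + th) / (1 - th) := div_nonneg (by linarith [hth.1]) (by linarith [hth.2])
  have hmul : (A : ℂ) * Complex.log ((1 + th) / (1 - th)) = Real.pi := by
    rw [show ((1 : ℂ) + th) / (1 - th) = (((1 + th) / (1 - th) : ℝ) : ℂ) by push_cast; rfl,
      ← Complex.ofReal_log hnonneg, hlog, ← Complex.ofReal_mul]
    congr 1
    field_simp
  rw [stripFold, hmul, Complex.cos_pi]
  norm_num

lemma exists_real_near_stripFold {A : ℝ} (hA : 0 < A) (hA1 : A ≤ 1 / 2) {t : ℂ} (ht : ‖t‖ < 1) :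
    ∃ s ∈ Icc (0 : ℝ) 1, ‖stripFold A t - s‖ < 2 * A := by
  set w := (A : ℂ) * Complex.log ((1 + t) / (1 - t))
  have harg := Complex.abs_arg_lt_pi_div_two_iff.2 (Or.inl (re_one_add_div_one_sub_pos ht))
  have hw : |w.im| < 2 * A := by
    rw [Complex.im_ofReal_mul, Complex.log_im, abs_mul, abs_of_pos hA]
    nlinarith [Real.pi_le_four]
  refine ⟨(1 - Real.cos w.re) / 2, ⟨?_, ?_⟩, ?_⟩
  · linarith [Real.cos_le_one w.re]
  · linarith [Real.neg_one_le_cos w.re]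
  · have heq : stripFold A t - (((1 - Real.cos w.re) / 2 : ℝ) : ℂ)
        = -(Complex.cos w - Real.cos w.re) / 2 := by
      simp only [stripFold, w]
      push_cast
      ring
    rw [heq, norm_div, norm_neg, Complex.norm_two]
    linarith [norm_cos_sub_cos_re_le (z := w) (by linarith)]

lemma exists_disc_through_zero_one {U : Set ℂ} (hU : IsOpen U)
    (hsub : ∀ s ∈ Icc (0 : ℝ) 1, (s : ℂ) ∈ U) :
    ∃ h : ℂ → ℂ, ∃ l : ℂ, DifferentiableOn ℂ h (ball 0 1) ∧ MapsTo h (ball 0 1) U ∧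
      h 0 = 0 ∧ h l = 1 ∧ ‖l‖ < 1 := by
  have hK : IsCompact ((↑) '' Icc (0 : ℝ) 1 : Set ℂ) :=
    isCompact_Icc.image Complex.continuous_ofReal
  obtain ⟨δ, hδ, hδU⟩ :=
    hK.exists_thickening_subset_open hU (by rintro _ ⟨s, hs, rfl⟩; exact hsub s hs)
  set A := min (δ / 2) (1 / 2)
  have hA : 0 < A := lt_min (by linarith) (by norm_num)
  have hA1 : A ≤ 1 / 2 := min_le_right _ _
  refine ⟨stripFold A, Real.tanh (Real.pi / (2 * A)), differentiableOn_stripFold A,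
    fun t ht => ?_, stripFold_zero A, stripFold_tanh hA.ne', ?_⟩
  · obtain ⟨s, hs, hnear⟩ := exists_real_near_stripFold hA hA1 (mem_ball_zero_iff.1 ht)
    refine hδU (mem_thickening_iff.2 ⟨s, mem_image_of_mem _ hs, ?_⟩)
    rw [dist_eq_norm]
    linarith [min_le_left (δ / 2) (1 / 2)]
  · rw [Complex.norm_real, Real.norm_eq_abs]
    exact Real.abs_tanh_lt_one _

end StripFold

section DiscExistence

variable {E : Type*} [NormedAddCommGroup E] [NormedSpace ℂ E] {Ω : Set E} {z w : E}

noncomputable def complexBernstein (n : ℕ) (f : C(unitInterval, E)) (ζ : ℂ) : E :=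
  ∑ k : Fin (n + 1), ((n.choose k : ℂ) * ζ ^ (k : ℕ) * (1 - ζ) ^ (n - k)) • f (bernstein.z k)

lemma differentiable_complexBernstein (n : ℕ) (f : C(unitInterval, E)) :
    Differentiable ℂ (complexBernstein n f) := by
  unfold complexBernstein
  fun_prop

lemma complexBernstein_ofReal (n : ℕ) (f : C(unitInterval, E)) (x : unitInterval) :
    complexBernstein n f (x : ℝ) = bernsteinApproximation n f x := by
  rw [bernsteinApproximation.apply, complexBernstein]
  refine Finset.sum_congr rfl fun k _ => ?_
  rw [bernstein_apply, ← Complex.coe_smul]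
  push_cast
  rfl

lemma exists_differentiable_of_joinedIn (hΩ : IsOpen Ω) (hzw : JoinedIn Ω z w) :
    ∃ P : ℂ → E, Differentiable ℂ P ∧ P 0 = z ∧ P 1 = w ∧ ∀ s ∈ Icc (0 : ℝ) 1, P s ∈ Ω := by
  obtain ⟨γ, hγ⟩ := hzw
  obtain ⟨δ, hδ, hδΩ⟩ := (isCompact_range γ.continuous).exists_thickening_subset_open hΩ
    (range_subset_iff.2 hγ)
  obtain ⟨n, hnδ, hn⟩ := ((bernsteinApproximation_uniform γ.toContinuousMap).eventually
    (ball_mem_nhds _ hδ) |>.and (eventually_ne_atTop 0)).exists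
  refine ⟨complexBernstein n γ.toContinuousMap, differentiable_complexBernstein n _, ?_, ?_,
    fun s hs => ?_⟩
  · simpa using complexBernstein_ofReal n γ.toContinuousMap 0
  · simpa [hn] using complexBernstein_ofReal n γ.toContinuousMap 1
  · refine hδΩ (mem_thickening_iff.2 ⟨γ ⟨s, hs⟩, mem_range_self _, ?_⟩)
    rw [complexBernstein_ofReal n γ.toContinuousMap ⟨s, hs⟩]
    exact (ContinuousMap.dist_apply_le_dist _).trans_lt (mem_ball.1 hnδ)

lemma exists_isDiscJoining (hΩo : IsOpen Ω) (hΩc : IsConnected Ω) (hz : z ∈ Ω) (hw : w ∈ Ω) :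
    ∃ f l, IsDiscJoining Ω z w f l := by
  obtain ⟨P, hP, hP0, hP1, hPΩ⟩ := exists_differentiable_of_joinedIn hΩo
    ((hΩo.isConnected_iff_isPathConnected.1 hΩc).joinedIn z hz w hw)
  obtain ⟨h, l, hh, hhΩ, hh0, hhl, hl⟩ :=
    exists_disc_through_zero_one (hΩo.preimage hP.continuous) hPΩ
  exact ⟨P ∘ h, l, hP.comp_differentiableOn hh, hhΩ, by simp [hh0, hP0], by simp [hhl, hP1],
    mem_ball_zero_iff.2 hl⟩

lemma exists_isDiscJoining_norm_lt (hΩo : IsOpen Ω) (hΩc : IsConnected Ω) (hz : z ∈ Ω)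
    (hw : w ∈ Ω) {r : ℝ} (hr : lempert Ω z w < r) : ∃ f l, IsDiscJoining Ω z w f l ∧ ‖l‖ < r :=
  have ⟨_, _, h⟩ := exists_isDiscJoining hΩo hΩc hz hw
  h.exists_norm_lt hr

end DiscExistence

section Continuity

variable {E : Type*} [NormedAddCommGroup E] [NormedSpace ℂ E] {Ω : Set E} {z w : E}

lemma lempert_le_of_ball_subset {ρ : ℝ} (hρ : 0 < ρ) (hball : ball z ρ ⊆ Ω) (hw : ‖w - z‖ < ρ) :
    lempert Ω z w ≤ ‖w - z‖ / ρ := by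
  rcases eq_or_ne w z with rfl | hne
  · have hconst : IsDiscJoining Ω w w (fun _ => w) 0 :=
      ⟨differentiableOn_const w, fun _ _ => hball (mem_ball_self hρ), rfl, rfl,
        mem_ball_self one_pos⟩
    simpa using hconst.lempert_le
  set d := ‖w - z‖
  have hd : 0 < d := norm_pos_iff.2 (sub_ne_zero.2 hne)
  have hl : ‖((d / ρ : ℝ) : ℂ)‖ = d / ρ := by
    rw [Complex.norm_real, Real.norm_of_nonneg (by positivity)]
  have hdisc : IsDiscJoining Ω z w (fun t => z + (t * ρ / d) • (w - z)) (d / ρ : ℝ) := by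
    refine ⟨by fun_prop, fun t ht => hball ?_, by simp, ?_, ?_⟩
    · rw [mem_ball, dist_eq_norm, add_sub_cancel_left, norm_smul, norm_div, norm_mul,
        Complex.norm_real, Complex.norm_real, Real.norm_of_nonneg hρ.le,
        Real.norm_of_nonneg hd.le, div_mul_cancel₀ _ hd.ne']
      exact mul_lt_of_lt_one_left hρ (mem_ball_zero_iff.1 ht)
    · have hone : ((d / ρ : ℝ) : ℂ) * ρ / d = 1 := by
        have hd' : (d : ℂ) ≠ 0 := Complex.ofReal_ne_zero.2 hd.ne'
        have hρ' : (ρ : ℂ) ≠ 0 := Complex.ofReal_ne_zero.2 hρ.ne'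
        push_cast
        field_simp
      simp only [hone, one_smul, add_sub_cancel]
    · rw [mem_ball_zero_iff, hl, div_lt_one hρ]
      exact hw
  exact hl ▸ hdisc.lempert_le

lemma exists_kobayashi_lt_of_norm_sub_lt (hΩo : IsOpen Ω) (hz : z ∈ Ω) {ε : ℝ} (hε : 0 < ε) :
    ∃ δ > 0, ∀ w ∈ Ω, ‖w - z‖ < δ → kobayashi Ω z w < ε := by
  obtain ⟨ρ, hρ, hball⟩ := Metric.isOpen_iff.1 hΩo z hz
  refine ⟨min (ρ / 2) (ρ * ε / 4), by positivity, fun w hw hwz => ?_⟩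
  have hwρ : ‖w - z‖ / ρ ≤ 1 / 2 := by
    rw [div_le_iff₀ hρ]
    linarith [min_le_left (ρ / 2) (ρ * ε / 4)]
  have hwε : ‖w - z‖ / ρ < ε / 4 := by
    rw [div_lt_iff₀ hρ]
    linarith [min_le_right (ρ / 2) (ρ * ε / 4)]
  have hlem := lempert_le_of_ball_subset hρ hball (by linarith [min_le_left (ρ / 2) (ρ * ε / 4)])
  calc kobayashi Ω z w ≤ poincareDist (lempert Ω z w) := kobayashi_le_poincareDist_lempert hz hw
    _ ≤ poincareDist (‖w - z‖ / ρ) :=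
        poincareDist_le_poincareDist (lempert_nonneg Ω z w) hlem (by linarith)
    _ ≤ 2 * (‖w - z‖ / ρ) := poincareDist_le_two_mul (by positivity) hwρ
    _ < ε := by linarith

end Continuity

section Escape

variable {E : Type*} [NormedAddCommGroup E] [NormedSpace ℂ E] {Ω : Set E} {a z w : E}
  {f : ℂ → E} {l : ℂ}

lemma norm_sub_le_of_norm_le_on_ball {σ R : ℝ} (hσ : 0 < σ)
    (hf : DifferentiableOn ℂ f (ball 0 σ)) (hR : ∀ t ∈ ball (0 : ℂ) σ, ‖f t‖ ≤ R)
    (hl : l ∈ ball (0 : ℂ) σ) : ‖f l - f 0‖ ≤ 2 * R / σ * ‖l‖ := by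
  have hmaps : MapsTo f (ball 0 σ) (closedBall (f 0) (2 * R)) := fun t ht => by
    rw [mem_closedBall, dist_eq_norm]
    linarith [norm_sub_le (f t) (f 0), hR t ht, hR 0 (mem_ball_self hσ)]
  simpa [dist_eq_norm] using Complex.dist_le_div_mul_dist_of_mapsTo_ball hf hmaps hl

lemma norm_sub_le_of_discs_norm_le {c : ℕ → E} {F : ℕ → ℂ → E} {L : ℕ → ℂ} {n : ℕ}
    {σ R : ℝ} (hσ : 0 < σ) (hσ1 : σ ≤ 1)
    (hdisc : ∀ i < n, IsDiscJoining Ω (c i) (c (i + 1)) (F i) (L i))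
    (hL : ∀ i < n, ‖L i‖ < σ) (hR : ∀ i < n, ∀ t ∈ ball (0 : ℂ) σ, ‖F i t‖ ≤ R) :
    ‖c n - c 0‖ ≤ 2 * R / σ * ∑ i ∈ Finset.range n, ‖L i‖ := by
  rw [← Finset.sum_range_sub, Finset.mul_sum]
  refine (norm_sum_le _ _).trans (Finset.sum_le_sum fun i hi => ?_)
  have hi := Finset.mem_range.1 hi
  obtain ⟨hF, -, hF0, hFL, -⟩ := hdisc i hi
  rw [← hF0, ← hFL]
  exact norm_sub_le_of_norm_le_on_ball hσ (hF.mono (ball_subset_ball hσ1)) (hR i hi)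
    (mem_ball_zero_iff.2 (hL i hi))

lemma IsDiscJoining.kobayashi_le (h : IsDiscJoining Ω z w f l) {t : ℂ} (ht : ‖t‖ < 1) :
    kobayashi Ω z (f t) ≤ poincareDist ‖t‖ := by
  have hdisc : IsDiscJoining Ω z (f t) f t := ⟨h.1, h.2.1, h.2.2.1, rfl, mem_ball_zero_iff.2 ht⟩
  have hz : z ∈ Ω := h.2.2.1 ▸ h.2.1 (mem_ball_self one_pos)
  exact (kobayashi_le_poincareDist_lempert hz (h.2.1 (mem_ball_zero_iff.2 ht))).trans
    (poincareDist_le_poincareDist (lempert_nonneg Ω z _) hdisc.lempert_le ht)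

lemma exists_disc_chain (hΩo : IsOpen Ω) (hΩc : IsConnected Ω) (ha : a ∈ Ω) (hw : w ∈ Ω)
    {δ : ℝ} (hδ : 0 < δ) (h : kobayashi Ω a w < δ) :
    ∃ (n : ℕ) (c : ℕ → E) (F : ℕ → ℂ → E) (L : ℕ → ℂ), IsChainJoining Ω a w c n ∧
      chainLength Ω c n < δ ∧ (∀ i < n, IsDiscJoining Ω (c i) (c (i + 1)) (F i) (L i)) ∧
      ∑ i ∈ Finset.range n, ‖L i‖ < 3 * δ := by
  obtain ⟨n, c, hc, hcδ⟩ := exists_chain_lt ha hw h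
  have hstep : ∀ i, ∃ (F : ℂ → E) (L : ℂ), i < n → IsDiscJoining Ω (c i) (c (i + 1)) F L ∧
      ‖L‖ < lempert Ω (c i) (c (i + 1)) + δ / (n + 1) := fun i => by
    by_cases hi : i < n
    · obtain ⟨F, L, hFL⟩ := exists_isDiscJoining_norm_lt hΩo hΩc (hc.2.2 i hi.le)
        (hc.2.2 (i + 1) hi) (lt_add_of_pos_right _ (by positivity : 0 < δ / (n + 1)))
      exact ⟨F, L, fun _ => hFL⟩
    · exact ⟨fun _ => a, 0, fun h => absurd h hi⟩
  choose F L hFL using hstep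
  refine ⟨n, c, F, L, hc, hcδ, fun i hi => (hFL i hi).1, ?_⟩
  calc ∑ i ∈ Finset.range n, ‖L i‖
      ≤ ∑ i ∈ Finset.range n,
          (2 * poincareDist (lempert Ω (c i) (c (i + 1))) + δ / (n + 1)) := by
        refine Finset.sum_le_sum fun i hi => ?_
        have hi := Finset.mem_range.1 hi
        linarith [(hFL i hi).2, half_le_poincareDist (lempert_nonneg Ω (c i) (c (i + 1)))
          (lempert_lt_one Ω _ _)]
    _ = 2 * chainLength Ω c n + n / (n + 1) * δ := by
        rw [Finset.sum_add_distrib, ← Finset.mul_sum, Finset.sum_const, Finset.card_range,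
          chainLength, nsmul_eq_mul]
        ring
    _ < 3 * δ := by
        have : (n : ℝ) / (n + 1) < 1 := (div_lt_one (by positivity)).2 (by linarith)
        nlinarith

lemma exists_far_point_kobayashi_lt (hΩo : IsOpen Ω) (hΩc : IsConnected Ω) (ha : a ∈ Ω)
    {ε : ℝ} (hε : 0 < ε) (H : ∀ δ > 0, ∃ w ∈ Ω, kobayashi Ω a w < δ ∧ ε ≤ ‖w - a‖)
    {η R : ℝ} (hη : 0 < η) (hR : 0 < R) : ∃ q ∈ Ω, R ≤ ‖q‖ ∧ kobayashi Ω a q < η := by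
  set σ := min (1 / 2) (η / 4)
  have hσ : 0 < σ := lt_min (by norm_num) (by linarith)
  have hσ2 : σ ≤ 1 / 2 := min_le_left _ _
  have hση : σ ≤ η / 4 := min_le_right _ _
  set δ := min (min (η / 2) (σ / 3)) (σ * ε / (12 * R))
  have hδ : 0 < δ := lt_min (lt_min (by linarith) (by linarith)) (by positivity)
  have hδη : δ ≤ η / 2 := (min_le_left _ _).trans (min_le_left _ _)
  have hδσ : δ ≤ σ / 3 := (min_le_left _ _).trans (min_le_right _ _)
  have hδε : 2 * R / σ * (3 * δ) ≤ ε / 2 := by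
    have := (le_div_iff₀ (by positivity)).1
      (min_le_right (min (η / 2) (σ / 3)) (σ * ε / (12 * R)))
    rw [div_mul_eq_mul_div, div_le_iff₀ hσ]
    nlinarith
  obtain ⟨w, hw, hkw, hεw⟩ := H δ hδ
  obtain ⟨n, c, F, L, hc, hcδ, hdisc, hL⟩ := exists_disc_chain hΩo hΩc ha hw hδ hkw
  have hLσ : ∀ i < n, ‖L i‖ < σ := fun i hi => by
    have := Finset.single_le_sum (fun j _ => norm_nonneg (L j)) (Finset.mem_range.2 hi)
    linarith
  by_cases hfar : ∃ i < n, ∃ t ∈ ball (0 : ℂ) σ, R ≤ ‖F i t‖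
  · obtain ⟨i, hi, t, ht, hRt⟩ := hfar
    have ht := mem_ball_zero_iff.1 ht
    have hq : F i t ∈ Ω := (hdisc i hi).2.1 (mem_ball_zero_iff.2 (by linarith))
    refine ⟨F i t, hq, hRt, ?_⟩
    calc kobayashi Ω a (F i t) ≤ kobayashi Ω a (c i) + kobayashi Ω (c i) (F i t) :=
          kobayashi_triangle ha (hc.2.2 i hi.le) hq
      _ ≤ chainLength Ω c n + poincareDist σ := add_le_add
          ((hc.take hi.le).kobayashi_le.trans (chainLength_mono Ω c hi.le))
          (((hdisc i hi).kobayashi_le (by linarith)).trans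
            (poincareDist_le_poincareDist (norm_nonneg t) ht.le (by linarith)))
      _ < η := by linarith [poincareDist_le_two_mul hσ.le hσ2]
  · push Not at hfar
    have hnear := norm_sub_le_of_discs_norm_le hσ (by linarith) hdisc hLσ
      fun i hi t ht => (hfar i hi t ht).le
    rw [hc.1, hc.2.1] at hnear
    nlinarith [mul_lt_mul_of_pos_left hL (show 0 < 2 * R / σ by positivity)]

lemma kCauchy_of_tendsto_kobayashi (ha : a ∈ Ω) {x : ℕ → E} (hx : ∀ n, x n ∈ Ω)
    (hlim : Tendsto (fun n => kobayashi Ω a (x n)) atTop (𝓝 0)) : KCauchy Ω x := by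
  intro ε hε
  obtain ⟨N, hN⟩ := eventually_atTop.1 (hlim.eventually (gt_mem_nhds (half_pos hε)))
  refine ⟨N, fun m hm n hn => ?_⟩
  calc kobayashi Ω (x m) (x n) ≤ kobayashi Ω (x m) a + kobayashi Ω a (x n) :=
        kobayashi_triangle (hx m) ha (hx n)
    _ < ε := by linarith [kobayashi_symm Ω (x m) a, hN m hm, hN n hn]

lemma exists_norm_sub_lt_of_kobayashi_lt (hΩo : IsOpen Ω) (hΩc : IsConnected Ω)
    (hkp : KPrimeAt Ω (atInfFilter E)) (ha : a ∈ Ω) {ε : ℝ} (hε : 0 < ε) :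
    ∃ δ > 0, ∀ w ∈ Ω, kobayashi Ω a w < δ → ‖w - a‖ < ε := by
  by_contra! H
  choose x hxΩ hxR hxk using fun m : ℕ =>
    exists_far_point_kobayashi_lt hΩo hΩc ha hε H (η := 1 / ((m : ℝ) + 1)) (R := m + 1)
      (by positivity) (by positivity)
  refine hkp ⟨x, hxΩ, kCauchy_of_tendsto_kobayashi ha hxΩ ?_, ?_⟩
  · exact squeeze_zero (fun m => kobayashi_nonneg Ω a (x m)) (fun m => (hxk m).le)
      tendsto_one_div_add_atTop_nhds_zero_nat
  · rw [atInfFilter, tendsto_comap_iff]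
    exact tendsto_atTop_mono hxR
      (tendsto_atTop_add_const_right atTop 1 tendsto_natCast_atTop_atTop)

end Escape

theorem hyperbolic_of_kPrime_at_infinity_general {E : Type*} [NormedAddCommGroup E]
    [NormedSpace ℂ E] (Ω : Set E) (hΩo : IsOpen Ω) (hΩc : IsConnected Ω)
    (hkp : KPrimeAt Ω (atInfFilter E)) :
    IsHyperbolic Ω := by
  refine ⟨fun z hz w hw hzw => ?_,
    fun z hz ε hε => exists_norm_sub_lt_of_kobayashi_lt hΩo hΩc hkp hz hε,
    fun z hz ε hε => exists_kobayashi_lt_of_norm_sub_lt hΩo hz hε⟩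
  by_contra hne
  obtain ⟨δ, hδ, hnorm⟩ := exists_norm_sub_lt_of_kobayashi_lt hΩo hΩc hkp hz
    (norm_pos_iff.2 (sub_ne_zero.2 (Ne.symm hne)))
  exact lt_irrefl _ (hnorm w hw (hzw ▸ hδ))

/-- If `∞` is a `k'`-point of an unbounded domain `Ω`, then `Ω` is hyperbolic. -/
theorem hyperbolic_of_kPrime_at_infinity {E : Type*} [NormedAddCommGroup E]
    [NormedSpace ℂ E] [CompleteSpace E] (Ω : Set E) (hΩo : IsOpen Ω) (hΩc : IsConnected Ω)
    (hub : ¬ Bornology.IsBounded Ω) (hkp : KPrimeAt Ω (atInfFilter E)) :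
    IsHyperbolic Ω :=
  hyperbolic_of_kPrime_at_infinity_general Ω hΩo hΩc hkp
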